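/- Let e be a Hermite–Biehler function having no real zeros, assume the de Branges space B(e) contains a nonzero element, and let β, γ ∈ [0, π) with β ≠ γ. Then the zeros of s_β and s_γ are interlaced: if x₁ < x₂ are real numbers with s_β(x₁) = s_β(x₂) = 0 and s_β(x) ≠ 0 for all x ∈ (x₁, x₂), then there exists exactly one x ∈ (x₁, x₂) with s_γ(x) = 0. -/

import Mathlib

open MeasureTheory Complex

noncomputable section

/-- `f#(z) := conj (f (conj z))`. -/
def fsharp (f : ℂ → ℂ) : ℂ → ℂ := fun z => (starRingEnd ℂ) (f ((starRingEnd ℂ) z))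

/-- Hermite–Biehler function: entire with `|e(conj z)| < |e z|` on the upper half-plane. -/
def IsHB (e : ℂ → ℂ) : Prop :=
  Differentiable ℂ e ∧
  ∀ z : ℂ, 0 < z.im → ‖e ((starRingEnd ℂ) z)‖ < ‖e z‖

/-- Membership in the de Branges space `B(e)`. -/
def MemDB (e f : ℂ → ℂ) : Prop :=
  Differentiable ℂ f ∧
  Integrable (fun x : ℝ => ‖f x / e x‖ ^ 2) ∧
  ∃ c : ℝ, 0 ≤ c ∧ ∀ z : ℂ, 0 < z.im →
    ‖f z / e z‖ ≤ c / Real.sqrt z.im ∧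
    ‖fsharp f z / e z‖ ≤ c / Real.sqrt z.im

/-- Squared norm in `B(e)`: `∫ |f(x)|² |e(x)|⁻² dx`. -/
def dBnormSq (e f : ℂ → ℂ) : ℝ :=
  ∫ x : ℝ, ‖f x‖ ^ 2 / ‖e x‖ ^ 2

/-- Inner product in `B(e)`: `∫ conj (f x) * g x * |e x|⁻² dx`. -/
def dBinner (e f g : ℂ → ℂ) : ℂ :=
  ∫ x : ℝ, (starRingEnd ℂ) (f x) * g x / ((‖e x‖ : ℂ)) ^ 2

/-- The reproducing kernel of `B(e)`. -/
def dBkernel (e : ℂ → ℂ) (z w : ℂ) : ℂ :=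
  if z = (starRingEnd ℂ) w then
    (deriv (fsharp e) z * e z - deriv e z * fsharp e z) / (2 * Real.pi * Complex.I)
  else
    (fsharp e z * e ((starRingEnd ℂ) w) - e z * fsharp e ((starRingEnd ℂ) w)) /
      (2 * Real.pi * Complex.I * (z - (starRingEnd ℂ) w))

/-- `s_β(z) := (i/2) (e^{iβ} e(z) − e^{−iβ} e#(z))`. -/
def sfun (e : ℂ → ℂ) (β : ℝ) (z : ℂ) : ℂ :=
  Complex.I / 2 *
    (Complex.exp (Complex.I * β) * e z - Complex.exp (-(Complex.I * β)) * fsharp e z)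

end

/-! On the real line `e x = ‖e x‖ * exp (i φ x)` for a continuous phase `φ`, and then
`s_θ x = -‖e x‖ sin (θ + φ x)`: the real zeros of `s_θ` are where `θ + φ` meets `πℤ`.
Differentiating the Hermite–Biehler inequality at the real axis shows that `φ` is antitone. It is
even strictly antitone: a phase constant on an interval would make some `s_θ` vanish there, hence
everywhere, whereas `s_θ i ≠ 0` because `‖e i‖ > ‖e (-i)‖`. So between consecutive zeros of `s_β`
the function `β + φ` runs bijectively over an interval `((n - 1)π, nπ)`, and
`γ + φ = (β + φ) + (γ - β)` meets `πℤ` exactly once there because `0 < |γ - β| < π`. -/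

open Complex ComplexConjugate Filter Topology Set

lemma fsharp_ofReal (f : ℂ → ℂ) (x : ℝ) : fsharp f x = conj (f x) := by
  simp [fsharp]

lemma Differentiable.fsharp {f : ℂ → ℂ} (hf : Differentiable ℂ f) :
    Differentiable ℂ (fsharp f) :=
  fun _ ↦ differentiableAt_conj_conj_iff.2 (hf _)

lemma Differentiable.sfun {e : ℂ → ℂ} (he : Differentiable ℂ e) (θ : ℝ) :
    Differentiable ℂ (sfun e θ) :=
  ((differentiable_const _).mul he).sub ((differentiable_const _).mul he.fsharp)
    |>.const_mul _

lemma IsHB.sfun_I_ne_zero {e : ℂ → ℂ} (he : IsHB e) (θ : ℝ) : sfun e θ I ≠ 0 := by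
  intro h
  have h' : exp (I * θ) * e I = exp (-(I * θ)) * fsharp e I := by
    simpa [sfun, sub_eq_zero, I_ne_zero] using h
  have hnorm : ‖e I‖ = ‖e (-I)‖ := by simpa [fsharp, norm_exp] using congrArg norm h'
  have hHB := he.2 I (by simp)
  rw [conj_I] at hHB
  exact hHB.ne' hnorm

lemma Differentiable.eq_zero_of_forall_mem_Ioo {f : ℂ → ℂ} (hf : Differentiable ℂ f) {a b : ℝ}
    (hab : a < b) (h : ∀ x ∈ Ioo a b, f x = 0) : f = 0 := by
  have hm : Ioo a b ∈ 𝓝 ((a + b) / 2) := Ioo_mem_nhds (by linarith) (by linarith)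
  have hreal : ∃ᶠ x : ℝ in 𝓝[≠] ((a + b) / 2), f x = 0 :=
    (eventually_nhdsWithin_of_eventually_nhds (eventually_of_mem hm h)).frequently
  have hmap : Tendsto ofReal (𝓝[≠] ((a + b) / 2)) (𝓝[≠] (((a + b) / 2 : ℝ) : ℂ)) :=
    tendsto_nhdsWithin_of_tendsto_nhds_of_eventually_within _
      (continuous_ofReal.tendsto _ |>.mono_left nhdsWithin_le_nhds)
      (eventually_nhdsWithin_of_forall fun _ hx ↦ mt ofReal_inj.1 hx)
  funext z
  exact (analyticOnNhd_univ_iff_differentiable.2 hf).eqOn_zero_of_preconnected_of_frequently_eq_zero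
    isPreconnected_univ (mem_univ _) (hmap.frequently hreal) (mem_univ z)

lemma HasDerivAt.nonneg_of_forall_gt {f : ℝ → ℝ} {f' a : ℝ} (hf : HasDerivAt f f' a)
    (h : ∀ y, a < y → f a ≤ f y) : 0 ≤ f' :=
  ge_of_tendsto ((hasDerivAt_iff_tendsto_slope.1 hf).mono_left
      (nhdsWithin_mono a (s := Ioi a) fun _ hy ↦ ne_of_gt hy))
    (eventually_nhdsWithin_of_forall fun y hy ↦ by
      rw [slope_def_field]; exact div_nonneg (sub_nonneg.2 (h y hy)) (sub_nonneg.2 (le_of_lt hy)))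

lemma hasDerivAt_comp_add_mul {f : ℂ → ℂ} (hf : Differentiable ℂ f) (z c : ℂ) (y : ℝ) :
    HasDerivAt (fun t : ℝ ↦ f (z + t * c)) (deriv f (z + y * c) * c) y := by
  have hline : HasDerivAt (fun w : ℂ ↦ z + w * c) c y := by
    simpa using (hasDerivAt_id (y : ℂ)).mul_const c |>.const_add z
  exact ((hf _).hasDerivAt.comp (y : ℂ) hline).comp_ofReal

-- `y ↦ ‖e (x + y i)‖² - ‖e (x - y i)‖²` vanishes at `0` and is positive for `y > 0`, and its
-- derivative at `0` is `-4 Im (conj (e x) * e' x)`.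
lemma IsHB.im_conj_mul_deriv_nonpos {e : ℂ → ℂ} (he : IsHB e) (x : ℝ) :
    (conj (e x) * deriv e x).im ≤ 0 := by
  have hup := (hasDerivAt_comp_add_mul he.1 x I 0).norm_sq
  have hdown := (hasDerivAt_comp_add_mul he.1 x (-I) 0).norm_sq
  have hgap : ∀ y : ℝ, 0 < y → ‖e (x + y * -I)‖ ^ 2 < ‖e (x + y * I)‖ ^ 2 := by
    intro y hy
    have := he.2 (x + y * I) (by simpa using hy)
    rw [map_add, map_mul, conj_ofReal, conj_ofReal, conj_I] at this
    gcongr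
  have := (hup.sub hdown).nonneg_of_forall_gt fun y hy ↦ by
    simpa using (hgap y hy).le
  simp [Complex.inner] at this
  rw [mul_im, conj_re, conj_im]
  linarith

lemma continuous_logDeriv_ofReal {e : ℂ → ℂ} (he : Differentiable ℂ e)
    (hreal : ∀ x : ℝ, e x ≠ 0) : Continuous fun t : ℝ ↦ logDeriv e t :=
  ((he.contDiff (n := 1)).continuous_deriv le_rfl |>.comp continuous_ofReal).div
    (he.continuous.comp continuous_ofReal) hreal

lemma hasDerivAt_integral_logDeriv {e : ℂ → ℂ} (he : Differentiable ℂ e)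
    (hreal : ∀ x : ℝ, e x ≠ 0) (x : ℝ) :
    HasDerivAt (fun x : ℝ ↦ ∫ t in (0 : ℝ)..x, logDeriv e t) (logDeriv e x) x :=
  ((continuous_logDeriv_ofReal he hreal).integral_hasStrictDerivAt 0 x).hasDerivAt

lemma mul_exp_integral_logDeriv {e : ℂ → ℂ} (he : Differentiable ℂ e)
    (hreal : ∀ x : ℝ, e x ≠ 0) (x : ℝ) :
    e 0 * exp (∫ t in (0 : ℝ)..x, logDeriv e t) = e x := by
  set L : ℝ → ℂ := fun x ↦ ∫ t in (0 : ℝ)..x, logDeriv e t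
  have hderiv (y : ℝ) : HasDerivAt (fun t : ℝ ↦ e t * exp (-L t)) 0 y := by
    refine ((he _).hasDerivAt.comp_ofReal.mul
      (hasDerivAt_integral_logDeriv he hreal y).neg.cexp).congr_deriv ?_
    rw [logDeriv_apply]
    field_simp [hreal y]
    ring
  have hconst := is_const_of_deriv_eq_zero (fun y ↦ (hderiv y).differentiableAt)
    (fun y ↦ (hderiv y).deriv) x 0
  simp only [L, intervalIntegral.integral_same, neg_zero, exp_zero, mul_one, ofReal_zero] at hconst
  rw [← hconst, mul_assoc, ← exp_add, neg_add_cancel, exp_zero, mul_one]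

noncomputable def phase (e : ℂ → ℂ) (x : ℝ) : ℝ :=
  arg (e 0) + (∫ t in (0 : ℝ)..x, logDeriv e t).im

lemma hasDerivAt_phase {e : ℂ → ℂ} (he : Differentiable ℂ e) (hreal : ∀ x : ℝ, e x ≠ 0)
    (x : ℝ) : HasDerivAt (phase e) (logDeriv e x).im x :=
  (imCLM.hasFDerivAt.comp_hasDerivAt x (hasDerivAt_integral_logDeriv he hreal x)).const_add _

lemma norm_mul_exp_phase {e : ℂ → ℂ} (he : Differentiable ℂ e) (hreal : ∀ x : ℝ, e x ≠ 0)
    (x : ℝ) : (‖e x‖ : ℂ) * exp (phase e x * I) = e x := by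
  rw [← mul_exp_integral_logDeriv he hreal x, phase]
  set L := ∫ t in (0 : ℝ)..x, logDeriv e t
  conv_rhs => rw [← norm_mul_exp_arg_mul_I (e 0), ← re_add_im L]
  rw [norm_mul, norm_exp]
  push_cast
  rw [mul_assoc, mul_assoc, ← exp_add, ← exp_add]
  ring_nf

lemma sfun_ofReal {e : ℂ → ℂ} (he : Differentiable ℂ e) (hreal : ∀ x : ℝ, e x ≠ 0)
    (θ x : ℝ) : sfun e θ x = -(‖e x‖ * Real.sin (θ + phase e x)) := by
  have hpolar := norm_mul_exp_phase he hreal x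
  set r := ‖e x‖
  set φ := phase e x
  rw [sfun, fsharp_ofReal, ← hpolar, map_mul, conj_ofReal, ← exp_conj]
  push_cast
  rw [Complex.sin, map_mul, conj_ofReal, conj_I]
  have h1 : exp (I * θ) * (r * exp (φ * I)) = r * exp ((θ + φ) * I) := by
    rw [mul_left_comm, ← exp_add]; ring_nf
  have h2 : exp (-(I * θ)) * (r * exp (φ * -I)) = r * exp (-(θ + φ) * I) := by
    rw [mul_left_comm, ← exp_add]; ring_nf
  rw [h1, h2]
  ring_nf

lemma sfun_ofReal_eq_zero_iff {e : ℂ → ℂ} (he : Differentiable ℂ e) (hreal : ∀ x : ℝ, e x ≠ 0)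
    (θ x : ℝ) : sfun e θ x = 0 ↔ ∃ k : ℤ, θ + phase e x = k * Real.pi := by
  rw [sfun_ofReal he hreal, neg_eq_zero, mul_eq_zero, ofReal_eq_zero, ofReal_eq_zero,
    or_iff_right (norm_ne_zero_iff.2 (hreal x)), Real.sin_eq_zero_iff]
  simp only [eq_comm]

lemma continuous_phase {e : ℂ → ℂ} (he : Differentiable ℂ e) (hreal : ∀ x : ℝ, e x ≠ 0) :
    Continuous (phase e) :=
  continuous_iff_continuousAt.2 fun x ↦ (hasDerivAt_phase he hreal x).continuousAt

lemma IsHB.phase_antitone {e : ℂ → ℂ} (he : IsHB e) (hreal : ∀ x : ℝ, e x ≠ 0) :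
    Antitone (phase e) := by
  refine antitone_of_deriv_nonpos (fun x ↦ (hasDerivAt_phase he.1 hreal x).differentiableAt)
    fun x ↦ ?_
  have h := he.im_conj_mul_deriv_nonpos x
  rw [mul_im, conj_re, conj_im] at h
  rw [(hasDerivAt_phase he.1 hreal x).deriv, logDeriv_apply, div_im, ← sub_div]
  exact div_nonpos_of_nonpos_of_nonneg (by linarith) (normSq_nonneg _)

lemma IsHB.phase_strictAnti {e : ℂ → ℂ} (he : IsHB e) (hreal : ∀ x : ℝ, e x ≠ 0) :
    StrictAnti (phase e) := by
  intro t t' htt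
  refine (he.phase_antitone hreal htt.le).lt_of_ne fun heq ↦ ?_
  have hzero : ∀ x ∈ Ioo t t', sfun e (-phase e t) x = 0 := by
    intro x hx
    have h₁ := he.phase_antitone hreal hx.1.le
    have h₂ := he.phase_antitone hreal hx.2.le
    rw [sfun_ofReal he.1 hreal, show phase e x = phase e t by linarith]
    simp
  exact he.sfun_I_ne_zero _ (congrFun ((he.1.sfun _).eq_zero_of_forall_mem_Ioo htt hzero) I)

lemma existsUnique_int_mul_mem_Ioo {p d : ℝ} (hp : 0 < p) (hlo : -p < d) (hhi : d < p)
    (hd : d ≠ 0) : ∃! j : ℤ, d - p < j * p ∧ j * p < d := by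
  have hunique (j j' : ℤ) (hj : d - p < j * p) (hj' : j' * p < d) : j' ≤ j := by
    have : (j' : ℝ) < j + 1 := lt_of_mul_lt_mul_right (by linarith) hp.le
    exact Int.lt_add_one_iff.1 (by exact_mod_cast this)
  obtain ⟨j, hj⟩ : ∃ j : ℤ, d - p < j * p ∧ j * p < d := by
    rcases hd.lt_or_gt with hneg | hpos
    · exact ⟨-1, by push_cast; constructor <;> linarith⟩
    · exact ⟨0, by push_cast; constructor <;> linarith⟩
  exact ⟨j, hj, fun j' hj' ↦ le_antisymm (hunique _ _ hj.1 hj'.2) (hunique _ _ hj'.1 hj.2)⟩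

lemma StrictAnti.existsUnique_mem_Ioo_of_consecutive {φ : ℝ → ℝ} (hφ : StrictAnti φ)
    (hcont : Continuous φ) {p β γ : ℝ} (hβ : β ∈ Ico 0 p) (hγ : γ ∈ Ico 0 p) (hβγ : β ≠ γ)
    {x₁ x₂ : ℝ} (hlt : x₁ < x₂) (h₁ : ∃ k : ℤ, β + φ x₁ = k * p)
    (h₂ : ∃ k : ℤ, β + φ x₂ = k * p) (hmid : ∀ x ∈ Ioo x₁ x₂, ¬∃ k : ℤ, β + φ x = k * p) :
    ∃! x, x ∈ Ioo x₁ x₂ ∧ ∃ k : ℤ, γ + φ x = k * p := by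
  obtain ⟨n, hn⟩ := h₁
  obtain ⟨m, hm⟩ := h₂
  have hp : 0 < p := hβ.1.trans_lt hβ.2
  have hIVT := intermediate_value_Ioo' hlt.le hcont.continuousOn
  have hmn : m = n - 1 := by
    have hlt' : m < n := by
      have : (m : ℝ) < n := lt_of_mul_lt_mul_right (by linarith [hφ hlt]) hp.le
      exact_mod_cast this
    by_contra hne
    have hle : (m : ℝ) ≤ n - 2 := by exact_mod_cast (by omega : m ≤ n - 2)
    obtain ⟨x, hx, hφx⟩ := hIVT (show (n - 1) * p - β ∈ Ioo (φ x₂) (φ x₁) by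
      constructor <;> nlinarith)
    exact hmid x hx ⟨n - 1, by push_cast; linarith⟩
  subst hmn
  push_cast at hm
  obtain ⟨j, ⟨hj₁, hj₂⟩, hj⟩ := existsUnique_int_mul_mem_Ioo hp (d := γ - β)
    (by linarith [hβ.2, hγ.1]) (by linarith [hβ.1, hγ.2]) (sub_ne_zero.2 hβγ.symm)
  obtain ⟨x, hx, hφx⟩ := hIVT (show (n + j) * p - γ ∈ Ioo (φ x₂) (φ x₁) by
    constructor <;> linarith)
  refine ⟨x, ⟨hx, n + j, by push_cast; linarith⟩, ?_⟩
  rintro y ⟨hy, k, hk⟩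
  have hkj : k - n = j := hj _ (by
    have hy₁ := hφ hy.1
    have hy₂ := hφ hy.2
    push_cast
    constructor <;> nlinarith)
  apply hφ.injective
  rw [hφx, ← hkj]
  push_cast
  linarith

theorem statement8_general (e : ℂ → ℂ) (he : IsHB e) (hreal : ∀ x : ℝ, e x ≠ 0)
    (β γ : ℝ) (hβ : β ∈ Set.Ico 0 Real.pi) (hγ : γ ∈ Set.Ico 0 Real.pi) (hβγ : β ≠ γ)
    (x₁ x₂ : ℝ) (hlt : x₁ < x₂)
    (h1 : sfun e β x₁ = 0) (h2 : sfun e β x₂ = 0)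
    (hmid : ∀ x : ℝ, x ∈ Set.Ioo x₁ x₂ → sfun e β x ≠ 0) :
    ∃! x : ℝ, x ∈ Set.Ioo x₁ x₂ ∧ sfun e γ x = 0 := by
  simp only [ne_eq, sfun_ofReal_eq_zero_iff he.1 hreal] at h1 h2 hmid ⊢
  exact (he.phase_strictAnti hreal).existsUnique_mem_Ioo_of_consecutive
    (continuous_phase he.1 hreal) hβ hγ hβγ hlt h1 h2 hmid

/-- For `β ≠ γ`, the zeros of `s_β` and `s_γ` are interlaced: between two
consecutive zeros of `s_β` lies exactly one zero of `s_γ`. -/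
theorem statement8 (e : ℂ → ℂ) (he : IsHB e) (hreal : ∀ x : ℝ, e x ≠ 0)
    (hne : ∃ f : ℂ → ℂ, MemDB e f ∧ f ≠ 0)
    (β γ : ℝ) (hβ : β ∈ Set.Ico 0 Real.pi) (hγ : γ ∈ Set.Ico 0 Real.pi) (hβγ : β ≠ γ)
    (x₁ x₂ : ℝ) (hlt : x₁ < x₂)
    (h1 : sfun e β x₁ = 0) (h2 : sfun e β x₂ = 0)
    (hmid : ∀ x : ℝ, x ∈ Set.Ioo x₁ x₂ → sfun e β x ≠ 0) :
    ∃! x : ℝ, x ∈ Set.Ioo x₁ x₂ ∧ sfun e γ x = 0 :=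
  statement8_general e he hreal β γ hβ hγ hβγ x₁ x₂ hlt h1 h2 hmid
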